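/- arXiv:1206.1927 — 9 statements merged into one kernel-verified Lean document; each statement's English description precedes it below -/
import Mathlib

section
/- Let X be a Hausdorff topological space and n a natural number. Then the subspace of the Vietoris hyperspace of closed subsets of X consisting of closed sets with fewer than n elements is itself Hausdorff. -/
open TopologicalSpace Set

/-- The Vietoris topology on the hyperspace of closed subsets, generated by the sets
`□U = {a | ↑a ⊆ U}` and `◇U = {a | (↑a ∩ U).Nonempty}` for `U` open. -/
instance vietoris (X : Type*) [TopologicalSpace X] : TopologicalSpace (Closeds X) :=
  generateFrom
    ({s | ∃ U : Set X, IsOpen U ∧ s = {a : Closeds X | (a : Set X) ⊆ U}} ∪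
     {s | ∃ U : Set X, IsOpen U ∧ s = {a : Closeds X | ((a : Set X) ∩ U).Nonempty}})

lemma vietoris_key {X : Type*} [TopologicalSpace X] [T2Space X] (a b : Closeds X)
    (hb : (b : Set X).Finite) {x : X} (hx : x ∈ (a : Set X)) (hxb : x ∉ (b : Set X)) :
    ∃ u v : Set (Closeds X), IsOpen u ∧ IsOpen v ∧ a ∈ u ∧ b ∈ v ∧ Disjoint u v := by
  obtain ⟨U, V, hU, hV, hxU, hbV, hUV⟩ :=
    SeparatedNhds.of_isCompact_isCompact isCompact_singleton hb.isCompact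
      (Set.disjoint_singleton_left.2 hxb)
  refine ⟨{c : Closeds X | ((c : Set X) ∩ U).Nonempty}, {c : Closeds X | (c : Set X) ⊆ V},
    ?_, ?_, ⟨x, hx, hxU rfl⟩, hbV, ?_⟩
  · exact isOpen_generateFrom_of_mem (Or.inr ⟨U, hU, rfl⟩)
  · exact isOpen_generateFrom_of_mem (Or.inl ⟨V, hV, rfl⟩)
  · rw [Set.disjoint_left]
    rintro c ⟨y, hyc, hyU⟩ hcV
    exact hUV.le_bot ⟨hyU, hcV hyc⟩

theorem small_closeds_t2 {X : Type*} [TopologicalSpace X] [T2Space X] (n : ℕ) :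
    T2Space {a : Closeds X // (a : Set X).encard < n} := by
  constructor
  rintro ⟨a, ha⟩ ⟨b, hb⟩ hne
  have hne' : (a : Set X) ≠ (b : Set X) := by
    intro h; exact hne (Subtype.ext (SetLike.coe_injective h))
  have haf : (a : Set X).Finite := Set.encard_lt_top_iff.1 (lt_of_lt_of_le ha le_top)
  have hbf : (b : Set X).Finite := Set.encard_lt_top_iff.1 (lt_of_lt_of_le hb le_top)
  have key : ∃ u v : Set (Closeds X), IsOpen u ∧ IsOpen v ∧ a ∈ u ∧ b ∈ v ∧ Disjoint u v := by
    by_cases hab : (a : Set X) ⊆ (b : Set X)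
    · have : ¬ (b : Set X) ⊆ (a : Set X) := fun h => hne' (subset_antisymm hab h)
      obtain ⟨x, hxb, hxa⟩ := Set.not_subset.1 this
      obtain ⟨u, v, hu, hv, hbu, hav, huv⟩ := vietoris_key b a haf hxb hxa
      exact ⟨v, u, hv, hu, hav, hbu, huv.symm⟩
    · obtain ⟨x, hxa, hxb⟩ := Set.not_subset.1 hab
      exact vietoris_key a b hbf hxa hxb
  obtain ⟨u, v, hu, hv, hau, hbv, huv⟩ := key
  exact ⟨Subtype.val ⁻¹' u, Subtype.val ⁻¹' v, hu.preimage continuous_subtype_val,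
    hv.preimage continuous_subtype_val, hau, hbv, huv.preimage _⟩
end

section
/- If X is a regular T1 (i.e. T3) topological space, then the Vietoris hyperspace of closed subsets of X is Hausdorff. -/
open TopologicalSpace Set

open Filter Topology

namespace TopologicalSpace.Closeds

variable {X : Type*} [TopologicalSpace X]

theorem isOpen_setOf_subset {U : Set X} (hU : IsOpen U) :
    IsOpen {a : Closeds X | (a : Set X) ⊆ U} :=
  isOpen_generateFrom_of_mem (Or.inl ⟨U, hU, rfl⟩)

theorem isOpen_setOf_inter_nonempty {U : Set X} (hU : IsOpen U) :
    IsOpen {a : Closeds X | ((a : Set X) ∩ U).Nonempty} :=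
  isOpen_generateFrom_of_mem (Or.inr ⟨U, hU, rfl⟩)

/-- Separate `x` from `b` by disjoint open sets `U ∋ x` and `V ⊇ b`; then `◇U ∋ a` and `□V ∋ b`
are disjoint. -/
theorem disjoint_nhds_of_mem_of_notMem [RegularSpace X] {a b : Closeds X} {x : X}
    (hxa : x ∈ a) (hxb : x ∉ b) : Disjoint (𝓝 a) (𝓝 b) := by
  obtain ⟨U, V, hU, hV, hxU, hbV, hUV⟩ := SeparatedNhds.of_isCompact_isClosed
    isCompact_singleton b.isClosed (disjoint_singleton_left.2 hxb)
  have hdisj : Disjoint {c : Closeds X | ((c : Set X) ∩ U).Nonempty}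
      {c : Closeds X | (c : Set X) ⊆ V} := by
    rw [Set.disjoint_left]
    rintro c ⟨y, hyc, hyU⟩ hcV
    exact hUV.notMem_of_mem_left hyU (hcV hyc)
  exact disjoint_of_disjoint_of_mem hdisj
    ((isOpen_setOf_inter_nonempty hU).mem_nhds ⟨x, hxa, hxU rfl⟩)
    ((isOpen_setOf_subset hV).mem_nhds hbV)

end TopologicalSpace.Closeds

theorem closeds_t2_of_t3_general {X : Type*} [TopologicalSpace X] [RegularSpace X] :
    T2Space (Closeds X) := by
  refine t2Space_iff_disjoint_nhds.2 fun a b hab => ?_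
  by_cases hab' : (a : Set X) ⊆ b
  · obtain ⟨x, hxb, hxa⟩ := not_subset.1 fun hba => hab (Closeds.ext (hab'.antisymm hba))
    exact (Closeds.disjoint_nhds_of_mem_of_notMem hxb hxa).symm
  · obtain ⟨x, hxa, hxb⟩ := not_subset.1 hab'
    exact Closeds.disjoint_nhds_of_mem_of_notMem hxa hxb

theorem closeds_t2_of_t3 {X : Type*} [TopologicalSpace X] [T1Space X] [RegularSpace X] :
    T2Space (Closeds X) :=
  closeds_t2_of_t3_general
end

section
/- Let X be a T1 topological space. If the Vietoris hyperspace of closed subsets of X is Hausdorff, then X is regular. -/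
open TopologicalSpace Set

theorem regular_of_closeds_t2 {X : Type*} [TopologicalSpace X] [T1Space X]
    (h : T2Space (Closeds X)) : RegularSpace X := by
  constructor
  intro s x hs hxs
  have hbasis := isTopologicalBasis_of_subbasis
    (rfl : vietoris X = generateFrom
      ({s | ∃ U : Set X, IsOpen U ∧ s = {a : Closeds X | (a : Set X) ⊆ U}} ∪
       {s | ∃ U : Set X, IsOpen U ∧ s = {a : Closeds X | ((a : Set X) ∩ U).Nonempty}}))
  have hcl : ∀ y : X, IsClosed (s ∪ {y}) := fun y => hs.union isClosed_singleton
  set a : Closeds X := ⟨s ∪ {x}, hcl x⟩ with ha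
  set b : Closeds X := ⟨s, hs⟩ with hb
  have hne : a ≠ b := by
    intro hab
    apply hxs
    have : (a : Set X) = (b : Set X) := congrArg _ hab
    have hx : x ∈ (a : Set X) := Or.inr rfl
    rw [this] at hx
    exact hx
  obtain ⟨u, v, hu, hv, hau, hbv, huv⟩ := t2_separation hne
  obtain ⟨_, ⟨F, ⟨hFfin, hFsub⟩, rfl⟩, haF, hFu⟩ := hbasis.exists_subset_of_mem_open hau hu
  obtain ⟨_, ⟨F', ⟨hF'fin, hF'sub⟩, rfl⟩, hbF', hF'v⟩ := hbasis.exists_subset_of_mem_open hbv hv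
  -- choose neighborhoods of x for each member of F
  have key1 : ∀ t : Set (Closeds X), ∃ N : Set X, IsOpen N ∧ x ∈ N ∧
      (t ∈ F → ∀ y ∈ N, (⟨s ∪ {y}, hcl y⟩ : Closeds X) ∈ t) := by
    intro t
    by_cases htF : t ∈ F
    · have hat : a ∈ t := haF t htF
      rcases hFsub htF with ⟨U, hU, rfl⟩ | ⟨U, hU, rfl⟩
      · -- box case : ↑a ⊆ U
        have hsub : s ∪ {x} ⊆ U := hat
        exact ⟨U, hU, hsub (Or.inr rfl), fun _ y hy =>
          union_subset (fun z hz => hsub (Or.inl hz)) (singleton_subset_iff.2 hy)⟩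
      · -- diamond case : (↑a ∩ U).Nonempty
        by_cases hsU : (s ∩ U).Nonempty
        · exact ⟨univ, isOpen_univ, mem_univ x, fun _ y _ =>
            hsU.mono (inter_subset_inter_left U subset_union_left)⟩
        · obtain ⟨z, hz, hzU⟩ := hat
          have hzx : z = x := by
            rcases hz with hz | hz
            · exact absurd ⟨z, hz, hzU⟩ hsU
            · exact hz
          subst hzx
          exact ⟨U, hU, hzU, fun _ y hy => ⟨y, Or.inr rfl, hy⟩⟩
    · exact ⟨univ, isOpen_univ, mem_univ x, fun h => absurd h htF⟩
  have key2 : ∀ t : Set (Closeds X), ∃ M : Set X, IsOpen M ∧ s ⊆ M ∧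
      (t ∈ F' → ∀ y ∈ M, (⟨s ∪ {y}, hcl y⟩ : Closeds X) ∈ t) := by
    intro t
    by_cases htF : t ∈ F'
    · have hbt : b ∈ t := hbF' t htF
      rcases hF'sub htF with ⟨U, hU, rfl⟩ | ⟨U, hU, rfl⟩
      · exact ⟨U, hU, hbt, fun _ y hy =>
          union_subset hbt (singleton_subset_iff.2 hy)⟩
      · exact ⟨univ, isOpen_univ, subset_univ s, fun _ y _ =>
          Set.Nonempty.mono (inter_subset_inter_left U subset_union_left) hbt⟩
    · exact ⟨univ, isOpen_univ, subset_univ s, fun h => absurd h htF⟩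
  choose N hNopen hNx hN using key1
  choose M hMopen hMs hM using key2
  set G : Set X := ⋂ t ∈ F, N t with hG
  set W : Set X := ⋂ t ∈ F', M t with hW
  have hGopen : IsOpen G := hFfin.isOpen_biInter fun t _ => hNopen t
  have hWopen : IsOpen W := hF'fin.isOpen_biInter fun t _ => hMopen t
  have hxG : x ∈ G := mem_iInter₂.2 fun t _ => hNx t
  have hsW : s ⊆ W := fun z hz => mem_iInter₂.2 fun t _ => hMs t hz
  have hdisj : Disjoint W G := by
    rw [Set.disjoint_left]
    intro y hyW hyG
    have h1 : (⟨s ∪ {y}, hcl y⟩ : Closeds X) ∈ ⋂₀ F :=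
      fun t ht => hN t ht y (mem_iInter₂.1 hyG t ht)
    have h2 : (⟨s ∪ {y}, hcl y⟩ : Closeds X) ∈ ⋂₀ F' :=
      fun t ht => hM t ht y (mem_iInter₂.1 hyW t ht)
    exact Set.disjoint_left.1 huv (hFu h1) (hF'v h2)
  rw [Filter.disjoint_iff]
  exact ⟨W, hWopen.mem_nhdsSet.2 hsW, G, hGopen.mem_nhds hxG, hdisj⟩
end

section
/- Let X be a T1 topological space. If the Vietoris hyperspace of nonempty closed subsets of X is regular, then X is normal: any two disjoint nonempty closed subsets of X can be separated by disjoint open sets. -/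
open TopologicalSpace Set

private def IsBoxSet {X : Type*} [TopologicalSpace X] (s : Set (Closeds X)) : Prop :=
  ∃ U : Set X, IsOpen U ∧ s = {c : Closeds X | (c : Set X) ⊆ U}

private def IsDiaSet {X : Type*} [TopologicalSpace X] (s : Set (Closeds X)) : Prop :=
  ∃ U : Set X, IsOpen U ∧ s = {c : Closeds X | ((c : Set X) ∩ U).Nonempty}

open Classical in
private noncomputable def boxW {X : Type*} [TopologicalSpace X] (s : Set (Closeds X)) : Set X :=
  if h : IsBoxSet s then h.choose else univ

open Classical in
private noncomputable def diaW {X : Type*} [TopologicalSpace X] (s : Set (Closeds X)) : Set X :=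
  if h : IsDiaSet s then h.choose else univ

private lemma boxW_isOpen {X : Type*} [TopologicalSpace X] (s : Set (Closeds X)) :
    IsOpen (boxW s) := by
  unfold boxW
  split
  · next h => exact h.choose_spec.1
  · exact isOpen_univ

private lemma boxW_spec {X : Type*} [TopologicalSpace X] {s : Set (Closeds X)}
    (h : IsBoxSet s) : s = {c : Closeds X | (c : Set X) ⊆ boxW s} := by
  unfold boxW
  rw [dif_pos h]
  exact h.choose_spec.2

private lemma boxW_univ {X : Type*} [TopologicalSpace X] {s : Set (Closeds X)}
    (h : ¬ IsBoxSet s) : boxW s = univ := by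
  unfold boxW
  rw [dif_neg h]

private lemma diaW_isOpen {X : Type*} [TopologicalSpace X] (s : Set (Closeds X)) :
    IsOpen (diaW s) := by
  unfold diaW
  split
  · next h => exact h.choose_spec.1
  · exact isOpen_univ

private lemma diaW_spec {X : Type*} [TopologicalSpace X] {s : Set (Closeds X)}
    (h : IsDiaSet s) : s = {c : Closeds X | ((c : Set X) ∩ diaW s).Nonempty} := by
  unfold diaW
  rw [dif_pos h]
  exact h.choose_spec.2

theorem normal_of_ne_closeds_regular {X : Type*} [TopologicalSpace X] [T1Space X]
    (h : RegularSpace {a : Closeds X // (a : Set X).Nonempty}) :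
    ∀ a b : Set X, IsClosed a → IsClosed b → a.Nonempty → b.Nonempty → Disjoint a b →
      ∃ U V : Set X, IsOpen U ∧ IsOpen V ∧ a ⊆ U ∧ b ⊆ V ∧ Disjoint U V := by
  classical
  intro a b ha hb hane hbne hdis
  haveI := h
  set S : Set (Set (Closeds X)) :=
    ({s | ∃ U : Set X, IsOpen U ∧ s = {a : Closeds X | (a : Set X) ⊆ U}} ∪
     {s | ∃ U : Set X, IsOpen U ∧ s = {a : Closeds X | ((a : Set X) ∩ U).Nonempty}}) with hSdef
  have hbasis : IsTopologicalBasis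
      ((fun f : Set (Set (Closeds X)) => ⋂₀ f) '' {f | f.Finite ∧ f ⊆ S}) :=
    isTopologicalBasis_of_subbasis rfl
  -- the point A in the hyperspace
  set pA : {c : Closeds X // (c : Set X).Nonempty} := ⟨⟨a, ha⟩, hane⟩ with hpAdef
  have hObopen : IsOpen {c : Closeds X | (c : Set X) ⊆ bᶜ} :=
    isOpen_generateFrom_of_mem (Or.inl ⟨bᶜ, hb.isOpen_compl, rfl⟩)
  have hOb : IsOpen (Subtype.val ⁻¹' {c : Closeds X | (c : Set X) ⊆ bᶜ} :
      Set {c : Closeds X // (c : Set X).Nonempty}) :=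
    hObopen.preimage continuous_subtype_val
  have hpAmem : pA ∈ (Subtype.val ⁻¹' {c : Closeds X | (c : Set X) ⊆ bᶜ} :
      Set {c : Closeds X // (c : Set X).Nonempty}) := by
    show (a : Set X) ⊆ bᶜ
    exact subset_compl_iff_disjoint_right.mpr hdis
  obtain ⟨t, htm, htc, hts⟩ := exists_mem_nhds_isClosed_subset (hOb.mem_nhds hpAmem)
  obtain ⟨O, hOt, hOopen, hpAO⟩ := mem_nhds_iff.mp htm
  obtain ⟨O', hO', hO'eq⟩ := isOpen_induced_iff.mp hOopen
  have hpAO' : (⟨a, ha⟩ : Closeds X) ∈ O' := by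
    rw [← hO'eq] at hpAO
    exact hpAO
  obtain ⟨v, hvB, hav, hvO'⟩ := hbasis.exists_subset_of_mem_open hpAO' hO'
  obtain ⟨f, ⟨hffin, hfS⟩, rfl⟩ := hvB
  -- the open set U
  set U : Set X := ⋂ s ∈ f, boxW s with hUdef
  have hUopen : IsOpen U := hffin.isOpen_biInter fun s _ => boxW_isOpen s
  have haU : a ⊆ U := by
    rw [hUdef]
    refine subset_iInter₂ fun s hs => ?_
    by_cases hbx : IsBoxSet s
    · have := hav s hs
      rw [boxW_spec hbx] at this
      exact this
    · rw [boxW_univ hbx]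
      exact subset_univ a
  -- upward-closedness lemma
  have hup : ∀ (f₀ : Set (Set (Closeds X))), f₀ ⊆ S → ∀ (D : Closeds X),
      a ⊆ (D : Set X) → (∀ s ∈ f₀, IsBoxSet s → (D : Set X) ⊆ boxW s) →
      (⟨a, ha⟩ : Closeds X) ∈ ⋂₀ f₀ → D ∈ ⋂₀ f₀ := by
    intro f₀ hf₀S D haD hbox hAf₀
    intro s hs
    by_cases hbx : IsBoxSet s
    · rw [boxW_spec hbx]
      exact hbox s hs hbx
    · rcases hf₀S hs with hmem | hmem
      · exact absurd hmem hbx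
      · obtain ⟨V, hV, rfl⟩ := hmem
        have hAs := hAf₀ _ hs
        exact hAs.mono (inter_subset_inter_left V haD)
  -- key claim : b is disjoint from closure U
  have hkey : Disjoint b (closure U) := by
    rw [Set.disjoint_left]
    intro x hxb hxcl
    have hCc : IsClosed (a ∪ {x}) := ha.union isClosed_singleton
    have hCne : (a ∪ {x}).Nonempty := hane.mono subset_union_left
    set pC : {c : Closeds X // (c : Set X).Nonempty} := ⟨⟨a ∪ {x}, hCc⟩, hCne⟩ with hpCdef
    have hclO : pC ∈ closure O := by
      rw [mem_closure_iff]
      intro G hG hpCG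
      obtain ⟨G', hG', rfl⟩ := isOpen_induced_iff.mp hG
      have hpCG' : (⟨a ∪ {x}, hCc⟩ : Closeds X) ∈ G' := hpCG
      obtain ⟨w, hwB, hCw, hwG'⟩ := hbasis.exists_subset_of_mem_open hpCG' hG'
      obtain ⟨f', ⟨hf'fin, hf'S⟩, rfl⟩ := hwB
      set N : Set X := ⋂ s ∈ f',
        (if IsBoxSet s then boxW s else if x ∈ diaW s then diaW s else univ) with hNdef
      have hNopen : IsOpen N := by
        refine hf'fin.isOpen_biInter fun s _ => ?_
        split_ifs
        · exact boxW_isOpen s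
        · exact diaW_isOpen s
        · exact isOpen_univ
      have hxN : x ∈ N := by
        rw [hNdef]
        refine mem_iInter₂.mpr fun s hs => ?_
        split_ifs with h1 h2
        · have := hCw s hs
          rw [boxW_spec h1] at this
          exact this (Or.inr rfl)
        · exact h2
        · trivial
      obtain ⟨y, hyN, hyU⟩ := mem_closure_iff.mp hxcl N hNopen hxN
      have hDc : IsClosed (a ∪ {y}) := ha.union isClosed_singleton
      have hDne : (a ∪ {y}).Nonempty := hane.mono subset_union_left
      have haD : a ⊆ a ∪ {y} := subset_union_left
      have hDU : (a ∪ {y}) ⊆ U := union_subset haU (singleton_subset_iff.mpr hyU)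
      have hyN' : ∀ s ∈ f',
          y ∈ (if IsBoxSet s then boxW s else if x ∈ diaW s then diaW s else univ) := by
        rw [hNdef] at hyN
        exact fun s hs => mem_iInter₂.mp hyN s hs
      have hDf' : (⟨a ∪ {y}, hDc⟩ : Closeds X) ∈ ⋂₀ f' := by
        intro s hs
        by_cases hbx : IsBoxSet s
        · rw [boxW_spec hbx]
          have hC := hCw s hs
          rw [boxW_spec hbx] at hC
          have hy : y ∈ boxW s := by
            have := hyN' s hs
            rwa [if_pos hbx] at this
          exact union_subset (subset_union_left.trans hC)
            (singleton_subset_iff.mpr hy)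
        · rcases hf'S hs with hmem | hmem
          · exact absurd hmem hbx
          · have hdia : IsDiaSet s := hmem
            have hC := hCw s hs
            rw [diaW_spec hdia] at hC ⊢
            obtain ⟨z, hz1, hz2⟩ := hC
            rcases hz1 with hz1 | hz1
            · exact ⟨z, Or.inl hz1, hz2⟩
            · rw [mem_singleton_iff] at hz1
              subst hz1
              have hy : y ∈ diaW s := by
                have := hyN' s hs
                rwa [if_neg hbx, if_pos hz2] at this
              exact ⟨y, Or.inr rfl, hy⟩
      have hDf : (⟨a ∪ {y}, hDc⟩ : Closeds X) ∈ ⋂₀ f := by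
        refine hup f hfS _ haD (fun s hs _ => hDU.trans ?_) hav
        exact biInter_subset_of_mem hs
      refine ⟨⟨⟨a ∪ {y}, hDc⟩, hDne⟩, hwG' hDf', ?_⟩
      rw [← hO'eq]
      exact hvO' hDf
    have hpCt : pC ∈ t := closure_minimal hOt htc hclO
    have : x ∈ bᶜ := hts hpCt (Or.inr rfl)
    exact this hxb
  exact ⟨U, (closure U)ᶜ, hUopen, isClosed_closure.isOpen_compl, haU,
    subset_compl_iff_disjoint_right.mpr hkey,
    disjoint_compl_right.mono_left subset_closure⟩
end

section
/- Let α be a type, and equip Set α with the topology obtained from the product topology on α → Prop (equivalently, the topology of pointwise convergence of indicator functions, where Prop/Bool carries the discrete topology). If A ⊆ Set α is a chain under set inclusion, then the topological closure of A is also a chain under set inclusion. -/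
open TopologicalSpace Set

/-- The topology on `Set α` of pointwise convergence of indicator functions:
induced from the product topology on `α → Bool` with `Bool` discrete. -/
noncomputable def setTop (α : Type*) : TopologicalSpace (Set α) :=
  TopologicalSpace.induced
    (fun s : Set α => fun x : α => @decide (x ∈ s) (Classical.propDecidable _))
    (@Pi.topologicalSpace α (fun _ => Bool) (fun _ => ⊥))

lemma setTop_isOpen_pair {α : Type*} (x y : α) :
    @IsOpen _ (setTop α) {u : Set α | x ∈ u ∧ y ∉ u} := by
  letI : TopologicalSpace (α → Bool) := @Pi.topologicalSpace α (fun _ => Bool) (fun _ => ⊥)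
  letI : TopologicalSpace Bool := ⊥
  haveI : DiscreteTopology Bool := ⟨rfl⟩
  letI : TopologicalSpace (Set α) := setTop α
  have key : {u : Set α | x ∈ u ∧ y ∉ u} =
      (fun s : Set α => fun x : α => @decide (x ∈ s) (Classical.propDecidable _)) ⁻¹'
        ({f : α → Bool | f x = true} ∩ {f : α → Bool | f y = false}) := by
    ext u
    simp [Classical.propDecidable, decide_eq_true_eq, decide_eq_false_iff_not]
  rw [key]
  refine isOpen_induced (IsOpen.inter ?_ ?_)
  · have : {f : α → Bool | f x = true} = (fun f : α → Bool => f x) ⁻¹' {true} := rfl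
    rw [this]
    exact (continuous_apply x).isOpen_preimage _ (isOpen_discrete _)
  · have : {f : α → Bool | f y = false} = (fun f : α → Bool => f y) ⁻¹' {false} := rfl
    rw [this]
    exact (continuous_apply y).isOpen_preimage _ (isOpen_discrete _)

theorem closure_chain_isChain {α : Type*} (A : Set (Set α)) (hA : IsChain (· ⊆ ·) A) :
    IsChain (· ⊆ ·) (@closure _ (setTop α) A) := by
  letI : TopologicalSpace (Set α) := setTop α
  intro s hs t ht hst
  by_contra h
  push_neg at h
  obtain ⟨hst1, hst2⟩ := h
  obtain ⟨x, hxs, hxt⟩ := not_subset.mp hst1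
  obtain ⟨y, hyt, hys⟩ := not_subset.mp hst2
  obtain ⟨a, ⟨hax, hay⟩, haA⟩ :=
    (mem_closure_iff.mp hs) _ (setTop_isOpen_pair x y) ⟨hxs, hys⟩
  obtain ⟨b, ⟨hby, hbx⟩, hbA⟩ :=
    (mem_closure_iff.mp ht) _ (setTop_isOpen_pair y x) ⟨hyt, hxt⟩
  have hab : a ≠ b := fun h => hbx (h ▸ hax)
  rcases hA haA hbA hab with hsub | hsub
  · exact hbx (hsub hax)
  · exact hay (hsub hby)
end

section
/- Let α be a type and equip Set α with the product topology (identifying subsets with their indicator functions into the discrete two-point space). If A ⊆ Set α is well-ordered by strict inclusion (every nonempty subfamily of A has a ⊆-least element and A is a chain), then the closure of A in this topology is also well-ordered by strict inclusion. -/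
open TopologicalSpace Set

lemma key_agree {α : Type*} (A : Set (Set α)) (s : Set α)
    (hs : s ∈ @closure _ (setTop α) A) (F : Finset α) :
    ∃ a ∈ A, ∀ x ∈ F, (x ∈ a ↔ x ∈ s) := by
  classical
  letI : TopologicalSpace (Set α) := setTop α
  set e : Set α → α → Bool := fun t x => @decide (x ∈ t) (Classical.propDecidable _) with he
  have hU : IsOpen {t : Set α | ∀ x ∈ F, (x ∈ t ↔ x ∈ s)} := by
    have : {t : Set α | ∀ x ∈ F, (x ∈ t ↔ x ∈ s)}
        = e ⁻¹' {f : α → Bool | ∀ x ∈ F, f x = e s x} := by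
      ext t
      simp only [mem_setOf_eq, mem_preimage, he]
      constructor
      · intro h x hx; exact decide_eq_decide.mpr (h x hx)
      · intro h x hx; exact decide_eq_decide.mp (h x hx)
    rw [this]
    apply isOpen_induced
    have : {f : α → Bool | ∀ x ∈ F, f x = e s x}
        = ⋂ x ∈ F, (fun f : α → Bool => f x) ⁻¹' {e s x} := by
      ext f; simp
    rw [this]
    exact isOpen_biInter_finset fun x _ =>
      (continuous_apply x).isOpen_preimage _ (isOpen_discrete _)
  have hsU : s ∈ {t : Set α | ∀ x ∈ F, (x ∈ t ↔ x ∈ s)} := fun x _ => Iff.rfl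
  rcases mem_closure_iff.mp hs _ hU hsU with ⟨a, haU, haA⟩
  exact ⟨a, haA, haU⟩

theorem closure_wellOrdered {α : Type*} (A : Set (Set α)) (hA : IsChain (· ⊆ ·) A)
    (hW : ∀ B ⊆ A, B.Nonempty → ∃ m ∈ B, ∀ b ∈ B, m ⊆ b) :
    IsChain (· ⊆ ·) (@closure _ (setTop α) A) ∧
    ∀ B ⊆ @closure _ (setTop α) A, B.Nonempty → ∃ m ∈ B, ∀ b ∈ B, m ⊆ b := by
  classical
  have chain : IsChain (· ⊆ ·) (@closure _ (setTop α) A) := by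
    intro s hs t ht hne
    by_contra hcon
    push_neg at hcon
    obtain ⟨hst, hts⟩ := hcon
    obtain ⟨x, hxs, hxt⟩ := not_subset.mp hst
    obtain ⟨y, hyt, hys⟩ := not_subset.mp hts
    obtain ⟨a, haA, ha⟩ := key_agree A s hs {x, y}
    obtain ⟨b, hbA, hb⟩ := key_agree A t ht {x, y}
    have hxa : x ∈ a := (ha x (by simp)).mpr hxs
    have hya : y ∉ a := fun h => hys ((ha y (by simp)).mp h)
    have hyb : y ∈ b := (hb y (by simp)).mpr hyt
    have hxb : x ∉ b := fun h => hxt ((hb x (by simp)).mp h)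
    rcases hA haA hbA (fun h => hya (h ▸ hyb)) with h | h
    · exact hxb (h hxa)
    · exact hya (h hyb)
  refine ⟨chain, ?_⟩
  intro B hB hBne
  by_contra hcon
  push_neg at hcon
  -- every element of B has a strictly smaller one with a witness
  have h : ∀ b ∈ B, ∃ b' ∈ B, b' ⊆ b ∧ ∃ x, x ∈ b ∧ x ∉ b' := by
    intro b hb
    obtain ⟨c, hc, hnc⟩ := hcon b hb
    obtain ⟨x, hx, hxc⟩ := not_subset.mp hnc
    have hsub : c ⊆ b := by
      rcases chain (hB hb) (hB hc) (fun h => hnc (h ▸ subset_rfl)) with h' | h'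
      · exact absurd h' hnc
      · exact h'
    exact ⟨c, hc, hsub, x, hx, hxc⟩
  choose g hgB hgsub xw hxw hxw' using h
  obtain ⟨b₀, hb₀⟩ := hBne
  -- descending sequence in B
  let f : ℕ → {p : Set α // p ∈ B} := fun n =>
    Nat.rec ⟨b₀, hb₀⟩ (fun _ p => ⟨g p.1 p.2, hgB p.1 p.2⟩) n
  have hfsucc : ∀ n, (f (n + 1)).1 = g (f n).1 (f n).2 := fun n => rfl
  let xs : ℕ → α := fun n => xw (f n).1 (f n).2
  have hxin : ∀ n, xs n ∈ (f n).1 := fun n => hxw _ _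
  have hxout : ∀ n, xs n ∉ (f (n + 1)).1 := fun n => by
    rw [hfsucc]; exact hxw' _ _
  have hmono : ∀ n, (f (n + 1)).1 ⊆ (f n).1 := fun n => by
    rw [hfsucc]; exact hgsub _ _
  have hmono' : ∀ {m n}, m ≤ n → (f n).1 ⊆ (f m).1 := by
    intro m n hmn
    induction hmn with
    | refl => exact subset_rfl
    | step h ih => exact fun _ hz => ih (hmono _ hz)
  have hxoutlt : ∀ {k n}, k < n → xs k ∉ (f n).1 := by
    intro k n hkn hmem
    exact hxout k (hmono' hkn hmem)
  -- pick approximating elements of A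
  have ha : ∀ n : ℕ, ∃ a ∈ A, ∀ j ≤ n, (xs j ∈ a ↔ xs j ∈ (f n).1) := by
    intro n
    obtain ⟨a, haA, hagree⟩ := key_agree A (f n).1 (hB (f n).2)
      ((Finset.range (n + 1)).image xs)
    exact ⟨a, haA, fun j hj => hagree (xs j)
      (Finset.mem_image_of_mem xs (Finset.mem_range.mpr (Nat.lt_succ_of_le hj)))⟩
  choose a haA hagree using ha
  have hxa : ∀ n, xs n ∈ a n := fun n => (hagree n n le_rfl).mpr (hxin n)
  have hxa' : ∀ n, xs n ∉ a (n + 1) := fun n h =>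
    hxoutlt (Nat.lt_succ_self n) ((hagree (n + 1) n (Nat.le_succ n)).mp h)
  obtain ⟨m, hm, hmin⟩ := hW (Set.range a) (range_subset_iff.mpr haA) ⟨a 0, mem_range_self 0⟩
  obtain ⟨N, rfl⟩ := hm
  exact hxa' N (hmin (a (N + 1)) (mem_range_self _) (hxa N))
end

section
/- Let X be a well-ordered set equipped with the order topology. Then the map sending each nonempty closed subset b of X to its minimum min(b) is continuous from the hyperspace of nonempty closed subsets with the Vietoris topology to X. Moreover, for every nonempty closed b, the set b \ {min b} is closed in X. -/
open TopologicalSpace Set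

/-! For a nonempty set `s` of a well-order, `c < min s` iff `s ⊆ Ioi c` (a `□`-condition) and
`min s < c` iff `s` meets `Iio c` (a `◇`-condition); so the preimages of the subbasic open sets
of the order topology under `min` are Vietoris open. Above `min s` the order has a successor,
whence `s \ {min s} = s ∩ Ioi (min s) = s ∩ Ici (succ (min s))` is closed. -/

namespace WellFounded

variable {X : Type*} [LinearOrder X] (wf : WellFounded ((· < ·) : X → X → Prop))

theorem lt_min_iff_subset_Ioi {s : Set X} (hs : s.Nonempty) (c : X) :
    c < wf.min s hs ↔ s ⊆ Ioi c :=
  ⟨fun h _ hx => h.trans_le (wf.min_le hx), fun h => h (wf.min_mem s hs)⟩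

theorem min_lt_iff_inter_Iio_nonempty {s : Set X} (hs : s.Nonempty) (c : X) :
    wf.min s hs < c ↔ (s ∩ Iio c).Nonempty :=
  ⟨fun h => ⟨_, wf.min_mem s hs, h⟩, fun ⟨_, hx, hxc⟩ => (wf.min_le hx).trans_lt hxc⟩

theorem diff_singleton_min_eq_inter_Ioi {s : Set X} (hs : s.Nonempty) :
    s \ {wf.min s hs} = s ∩ Ioi (wf.min s hs) := by
  ext x
  simp only [mem_sdiff, mem_singleton_iff, mem_inter_iff, mem_Ioi]
  exact and_congr_right fun hx => (wf.min_le hx).lt_iff_ne'.symm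

end WellFounded

theorem isClosed_Ioi_of_wellFoundedLT {X : Type*} [LinearOrder X] [WellFoundedLT X]
    [TopologicalSpace X] [ClosedIciTopology X] (a : X) : IsClosed (Ioi a) := by
  let := SuccOrder.ofLinearWellFoundedLT X
  by_cases ha : IsMax a
  · rw [Ioi_eq_empty_iff.mpr ha]
    exact isClosed_empty
  · rw [← Order.Ici_succ_of_not_isMax ha]
    exact isClosed_Ici

section Vietoris

variable {X : Type*} [TopologicalSpace X]

theorem TopologicalSpace.Closeds.isOpen_setOf_subset_s12 {U : Set X} (hU : IsOpen U) :
    IsOpen {a : Closeds X | (a : Set X) ⊆ U} :=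
  isOpen_generateFrom_of_mem (Or.inl ⟨U, hU, rfl⟩)

theorem TopologicalSpace.Closeds.isOpen_setOf_inter_nonempty_s12 {U : Set X} (hU : IsOpen U) :
    IsOpen {a : Closeds X | ((a : Set X) ∩ U).Nonempty} :=
  isOpen_generateFrom_of_mem (Or.inr ⟨U, hU, rfl⟩)

end Vietoris

theorem min_continuous_on_ne_closeds {X : Type*} [LinearOrder X] [TopologicalSpace X]
    [OrderTopology X] [WellFoundedLT X] :
    Continuous (fun a : {a : Closeds X // (a.1 : Set X).Nonempty} =>
      (IsWellFounded.wf (r := ((· < ·) : X → X → Prop))).min (a.1 : Set X) a.2) ∧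
    ∀ a : {a : Closeds X // (a.1 : Set X).Nonempty},
      IsClosed ((a.1 : Set X) \
        {(IsWellFounded.wf (r := ((· < ·) : X → X → Prop))).min (a.1 : Set X) a.2}) := by
  set wf := IsWellFounded.wf (r := ((· < ·) : X → X → Prop))
  set m : {a : Closeds X // (a.1 : Set X).Nonempty} → X := fun a => wf.min (a.1 : Set X) a.2
  refine ⟨OrderTopology.continuous_iff.mpr fun c => ⟨?_, ?_⟩, fun a => ?_⟩
  · have hpre : m ⁻¹' Ioi c = Subtype.val ⁻¹' {a : Closeds X | (a : Set X) ⊆ Ioi c} :=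
      ext fun a => wf.lt_min_iff_subset_Ioi a.2 c
    rw [hpre]
    exact (Closeds.isOpen_setOf_subset_s12 isOpen_Ioi).preimage continuous_subtype_val
  · have hpre : m ⁻¹' Iio c = Subtype.val ⁻¹' {a : Closeds X | ((a : Set X) ∩ Iio c).Nonempty} :=
      ext fun a => wf.min_lt_iff_inter_Iio_nonempty a.2 c
    rw [hpre]
    exact (Closeds.isOpen_setOf_inter_nonempty_s12 isOpen_Iio).preimage continuous_subtype_val
  · rw [wf.diff_singleton_min_eq_inter_Ioi (s := (a.1 : Set X)) a.2]
    exact a.1.isClosed.inter (isClosed_Ioi_of_wellFoundedLT _)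
end

section
/- Let X be a compact Hausdorff space and let (a_d)_{d ∈ D} be an increasing net of nonempty closed subsets of X (a_d ⊆ a_{d'} whenever d ≤ d'). Then the net converges in the Vietoris topology on nonempty closed subsets of X to the closure of the union ⋃_d a_d. -/
open TopologicalSpace Set

theorem increasing_net_tendsto_closure_iUnion {X D : Type*} [TopologicalSpace X] [CompactSpace X]
    [T2Space X] [Preorder D] [Nonempty D] [IsDirected D (· ≤ ·)]
    (a : D → {a : Closeds X // (a.1 : Set X).Nonempty})
    (hinc : ∀ d d' : D, d ≤ d' → ((a d).1 : Set X) ⊆ ((a d').1 : Set X)) :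
    ∃ L : {a : Closeds X // (a.1 : Set X).Nonempty},
      (L.1 : Set X) = closure (⋃ d, ((a d).1 : Set X)) ∧
      Filter.Tendsto a Filter.atTop (nhds L) := by
  have hne : (closure (⋃ d, ((a d).1 : Set X))).Nonempty := by
    obtain ⟨d⟩ := ‹Nonempty D›
    obtain ⟨x, hx⟩ := (a d).2
    exact ⟨x, subset_closure (mem_iUnion.2 ⟨d, hx⟩)⟩
  refine ⟨⟨⟨closure (⋃ d, ((a d).1 : Set X)), isClosed_closure⟩, hne⟩, rfl, ?_⟩
  rw [tendsto_subtype_rng]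
  refine tendsto_nhds_generateFrom_iff.2 ?_
  rintro s (⟨U, hU, rfl⟩ | ⟨U, hU, rfl⟩) hLs
  · -- box case
    filter_upwards with d
    exact fun x hx => hLs (subset_closure (mem_iUnion.2 ⟨d, hx⟩))
  · -- diamond case
    obtain ⟨x, hxc, hxU⟩ := hLs
    obtain ⟨y, hyU, hy⟩ := mem_closure_iff.1 hxc U hU hxU
    obtain ⟨d, hyd⟩ := mem_iUnion.1 hy
    filter_upwards [Filter.eventually_ge_atTop d] with d' hd'
    exact ⟨y, hinc d d' hd' hyd, hyU⟩
end

section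
/- Let X be a Hausdorff topological space. Identify each pair (x, y) ∈ X × X with its Kuratowski pair {{x}, {x, y}}, an element of the Vietoris hyperspace of the Vietoris hyperspace of X. Then the set of all Kuratowski pairs {{x},{x,y}} with x, y ∈ X is a closed subset of the space of closed subsets, with at most two elements, of Closeds(X) (with the iterated Vietoris topology). -/
open TopologicalSpace Set

section Aux

variable {X : Type*} [TopologicalSpace X]

/-- `□U` -/
def vbox (U : Set X) : Set (Closeds X) := {a : Closeds X | (a : Set X) ⊆ U}

/-- `◇U` -/
def vdia (U : Set X) : Set (Closeds X) := {a : Closeds X | ((a : Set X) ∩ U).Nonempty}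

lemma isOpen_vbox {U : Set X} (hU : IsOpen U) : IsOpen (vbox U) :=
  isOpen_generateFrom_of_mem (Or.inl ⟨U, hU, rfl⟩)

lemma isOpen_vdia {U : Set X} (hU : IsOpen U) : IsOpen (vdia U) :=
  isOpen_generateFrom_of_mem (Or.inr ⟨U, hU, rfl⟩)

/-- closed sets meeting two disjoint open sets (hence having at least two points) -/
def twoSet (X : Type*) [TopologicalSpace X] : Set (Closeds X) :=
  ⋃ (p : Set X × Set X) (_ : IsOpen p.1) (_ : IsOpen p.2) (_ : Disjoint p.1 p.2),
    vdia p.1 ∩ vdia p.2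

lemma isOpen_twoSet : IsOpen (twoSet X) :=
  isOpen_iUnion fun p => isOpen_iUnion fun h1 => isOpen_iUnion fun h2 =>
    isOpen_iUnion fun _ => (isOpen_vdia h1).inter (isOpen_vdia h2)

lemma mem_twoSet_of [T2Space X] {a : Closeds X} {p q : X} (hp : p ∈ (a : Set X))
    (hq : q ∈ (a : Set X)) (hpq : p ≠ q) : a ∈ twoSet X := by
  obtain ⟨U, V, hU, hV, hpU, hqV, hUV⟩ := t2_separation hpq
  exact mem_iUnion.2 ⟨(U, V), mem_iUnion.2 ⟨hU, mem_iUnion.2 ⟨hV, mem_iUnion.2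
    ⟨hUV, ⟨p, hp, hpU⟩, ⟨q, hq, hqV⟩⟩⟩⟩⟩

lemma singleton_notMem_twoSet {a : Closeds X} {x : X} (ha : (a : Set X) = {x}) :
    a ∉ twoSet X := by
  intro h
  simp only [twoSet, mem_iUnion, vdia, mem_inter_iff, mem_setOf_eq] at h
  obtain ⟨p, h1, h2, hd, ⟨u, hu, huU⟩, ⟨v, hv, hvV⟩⟩ := h
  rw [ha, mem_singleton_iff] at hu hv
  subst hu; subst hv
  exact hd.le_bot ⟨huU, hvV⟩

/-- The Kuratowski pair `{{x},{x,y}}` as a set of closed sets. -/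
def kur (x y : X) : Set (Closeds X) :=
  {a : Closeds X | (a : Set X) = {x} ∨ (a : Set X) = ({x, y} : Set X)}

lemma mem_of_kur {a : Closeds X} {x y : X} (h : a ∈ kur x y) : x ∈ (a : Set X) := by
  rcases h with h | h <;> rw [h] <;> simp

lemma subset_of_kur {a : Closeds X} {x y : X} (h : a ∈ kur x y) :
    (a : Set X) ⊆ ({x, y} : Set X) := by
  rcases h with h | h <;> rw [h]
  exact singleton_subset_iff.2 (mem_insert x _)

lemma kur_eq {A B : Closeds X} {x y : X} (hA : (A : Set X) = {x})
    (hB : (B : Set X) = ({x, y} : Set X)) : kur x y = {A, B} := by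
  ext a
  simp only [kur, mem_setOf_eq, mem_insert_iff, mem_singleton_iff, ← hA, ← hB]
  constructor
  · rintro (h | h)
    · exact Or.inl (SetLike.coe_injective h)
    · exact Or.inr (SetLike.coe_injective h)
  · rintro (rfl | rfl)
    · exact Or.inl rfl
    · exact Or.inr rfl

lemma no_three {x y : X} {s U V W : Set X} (hs : s ⊆ {x, y})
    (hUV : Disjoint U V) (hUW : Disjoint U W) (hVW : Disjoint V W)
    (h1 : (s ∩ U).Nonempty) (h2 : (s ∩ V).Nonempty) (h3 : (s ∩ W).Nonempty) : False := by
  obtain ⟨a, haS, haU⟩ := h1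
  obtain ⟨b, hbS, hbV⟩ := h2
  obtain ⟨c, hcS, hcW⟩ := h3
  have ha := hs haS; have hb := hs hbS; have hc := hs hcS
  simp only [mem_insert_iff, mem_singleton_iff] at ha hb hc
  rcases ha with rfl | rfl <;> rcases hb with hb | hb <;> rcases hc with hc | hc <;>
    first
      | (exact hUV.le_bot ⟨haU, hb ▸ hbV⟩)
      | (exact hUW.le_bot ⟨haU, hc ▸ hcW⟩)
      | (exact hVW.le_bot ⟨hb ▸ hbV, hc ▸ hcW⟩)

lemma t2_triple [T2Space X] {p q r : X} (hpq : p ≠ q) (hpr : p ≠ r) (hqr : q ≠ r) :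
    ∃ U V W : Set X, IsOpen U ∧ IsOpen V ∧ IsOpen W ∧ p ∈ U ∧ q ∈ V ∧ r ∈ W ∧
      Disjoint U V ∧ Disjoint U W ∧ Disjoint V W := by
  obtain ⟨U1, V1, hU1, hV1, hp1, hq1, h1⟩ := t2_separation hpq
  obtain ⟨U2, W1, hU2, hW1, hp2, hr1, h2⟩ := t2_separation hpr
  obtain ⟨V2, W2, hV2, hW2, hq2, hr2, h3⟩ := t2_separation hqr
  exact ⟨U1 ∩ U2, V1 ∩ V2, W1 ∩ W2, hU1.inter hU2, hV1.inter hV2, hW1.inter hW2,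
    ⟨hp1, hp2⟩, ⟨hq1, hq2⟩, ⟨hr1, hr2⟩,
    h1.mono inter_subset_left inter_subset_left,
    h2.mono inter_subset_right inter_subset_left,
    h3.mono inter_subset_right inter_subset_right⟩

lemma main [T2Space X] (S : Set (Closeds X)) (hS2 : S.encard ≤ 2)
    (hK : ¬ ∃ x y : X, S = kur x y) :
    ∃ N : Set (Closeds (Closeds X)), IsOpen N ∧
      (∀ c : Closeds (Closeds X), (c : Set (Closeds X)) = S → c ∈ N) ∧
      ∀ (d : Closeds (Closeds X)) (x y : X), (d : Set (Closeds X)) = kur x y → d ∉ N := by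
  by_cases hbot : ∃ A ∈ S, (A : Set X) = ∅
  · -- some element of S is empty
    obtain ⟨A, hAS, hA⟩ := hbot
    refine ⟨vdia (vbox (∅ : Set X)), isOpen_vdia (isOpen_vbox isOpen_empty), ?_, ?_⟩
    · intro c hc
      exact ⟨A, by rw [hc]; exact hAS, by simp only [vbox, mem_setOf_eq, hA]; exact subset_rfl⟩
    · rintro d x y hd ⟨a, haD, ha⟩
      rw [hd] at haD
      exact ha (mem_of_kur haD)
  by_cases hmulti : ∀ A ∈ S, ∃ p ∈ (A : Set X), ∃ q ∈ (A : Set X), p ≠ q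
  · -- all elements of S have at least two points
    refine ⟨vbox (twoSet X), isOpen_vbox isOpen_twoSet, ?_, ?_⟩
    · intro c hc A hAc
      rw [hc] at hAc
      obtain ⟨p, hp, q, hq, hpq⟩ := hmulti A hAc
      exact mem_twoSet_of hp hq hpq
    · rintro d x y hd hdN
      have hmem : (⟨{x}, isClosed_singleton⟩ : Closeds X) ∈ (d : Set (Closeds X)) := by
        rw [hd]; exact Or.inl rfl
      exact singleton_notMem_twoSet rfl (hdN hmem)
  push_neg at hmulti hbot
  obtain ⟨A, hAS, hA⟩ := hmulti
  obtain ⟨p, hp⟩ := hbot A hAS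
  have hAp : (A : Set X) = {p} := eq_singleton_iff_unique_mem.2 ⟨hp, fun q hq => hA q hq p hp⟩
  by_cases hB : ∃ B ∈ S, B ≠ A
  swap
  · -- S = {A}, which is the Kuratowski pair of (p, p)
    push_neg at hB
    refine absurd ⟨p, p, ?_⟩ hK
    have hS1 : S = {A} := Subset.antisymm (fun C hC => hB C hC) (by simpa using hAS)
    rw [hS1, kur_eq hAp (by rw [hAp, pair_eq_singleton]), pair_eq_singleton]
  obtain ⟨B, hBS, hBA⟩ := hB
  by_cases hB2 : ∃ q ∈ (B : Set X), ∃ r ∈ (B : Set X), q ≠ r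
  · obtain ⟨q, hq, r, hr, hqr⟩ := hB2
    by_cases hB3 : ∀ s ∈ (B : Set X), s = q ∨ s = r
    · -- (B : Set X) = {q, r}
      have hBqr : (B : Set X) = ({q, r} : Set X) := by
        refine Subset.antisymm (fun s hs => by rcases hB3 s hs with rfl | rfl <;> simp) ?_
        rintro s (rfl | rfl)
        · exact hq
        · exact hr
      by_cases hpB : p ∈ (B : Set X)
      ·
        exfalso
        -- S = {A, B} from the cardinality bound
        have hSAB : S = {A, B} := by
          refine Subset.antisymm ?_ ?_
          · intro C hCS
            by_contra hC
            simp only [mem_insert_iff, mem_singleton_iff, not_or] at hC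
            have hsub : ({C, A, B} : Set (Closeds X)) ⊆ S := by
              rintro D (rfl | rfl | rfl) <;> assumption
            have h3 : ({C, A, B} : Set (Closeds X)).encard = 3 := by
              rw [encard_insert_of_notMem (by simp [hC.1, hC.2]), encard_pair hBA.symm]; rfl
            have hle := (encard_mono hsub).trans hS2
            rw [h3] at hle
            norm_num at hle
          · rintro C (rfl | rfl) <;> assumption
        rw [hBqr, mem_insert_iff, mem_singleton_iff] at hpB
        rcases hpB with rfl | rfl
        · exact hK ⟨p, r, by rw [hSAB, kur_eq hAp hBqr]⟩
        · exact hK ⟨p, q, by rw [hSAB, kur_eq hAp (by rw [hBqr, pair_comm])]⟩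
      · -- p ∉ B : separate p, q, r
        have hpq : p ≠ q := fun h => hpB (h ▸ hq)
        have hpr : p ≠ r := fun h => hpB (h ▸ hr)
        obtain ⟨U, V, W, hU, hV, hW, hpU, hqV, hrW, hUV, hUW, hVW⟩ := t2_triple hpq hpr hqr
        refine ⟨vdia (vbox U) ∩ vdia (vdia V ∩ vdia W),
          (isOpen_vdia (isOpen_vbox hU)).inter
            (isOpen_vdia ((isOpen_vdia hV).inter (isOpen_vdia hW))), ?_, ?_⟩
        · intro c hc
          constructor
          · exact ⟨A, by rw [hc]; exact hAS,
              by rw [vbox, mem_setOf_eq, hAp]; exact singleton_subset_iff.2 hpU⟩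
          · exact ⟨B, by rw [hc]; exact hBS, ⟨q, hq, hqV⟩, ⟨r, hr, hrW⟩⟩
        · rintro d x y hd ⟨⟨a1, ha1D, ha1U⟩, ⟨a2, ha2D, ha2V, ha2W⟩⟩
          rw [hd] at ha1D ha2D
          have hxU : x ∈ U := ha1U (mem_of_kur ha1D)
          obtain ⟨v, hvA, hvV⟩ := ha2V
          obtain ⟨w, hwA, hwW⟩ := ha2W
          have hv := subset_of_kur ha2D hvA
          have hw := subset_of_kur ha2D hwA
          simp only [mem_insert_iff, mem_singleton_iff] at hv hw
          rcases hv with rfl | rfl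
          · exact hUV.le_bot ⟨hxU, hvV⟩
          rcases hw with rfl | rfl
          · exact hUW.le_bot ⟨hxU, hwW⟩
          · exact hVW.le_bot ⟨hvV, hwW⟩
    · -- B has three distinct points q, r, s
      push_neg at hB3
      obtain ⟨s, hs, hsq, hsr⟩ := hB3
      obtain ⟨U, V, W, hU, hV, hW, hqU, hrV, hsW, hUV, hUW, hVW⟩ :=
        t2_triple hqr (Ne.symm hsq) (Ne.symm hsr)
      refine ⟨vdia (vdia U ∩ vdia V ∩ vdia W),
        isOpen_vdia (((isOpen_vdia hU).inter (isOpen_vdia hV)).inter (isOpen_vdia hW)),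
        ?_, ?_⟩
      · intro c hc
        exact ⟨B, by rw [hc]; exact hBS, ⟨⟨q, hq, hqU⟩, ⟨r, hr, hrV⟩⟩, ⟨s, hs, hsW⟩⟩
      · rintro d x y hd ⟨a, haD, ⟨haU, haV⟩, haW⟩
        rw [hd] at haD
        exact no_three (subset_of_kur haD) hUV hUW hVW haU haV haW
  · -- B is a singleton {q} with q ≠ p
    push_neg at hB2
    obtain ⟨q, hqB⟩ := hbot B hBS
    have hBq : (B : Set X) = {q} :=
      eq_singleton_iff_unique_mem.2 ⟨hqB, fun r hr => hB2 r hr q hqB⟩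
    have hpq : p ≠ q := by
      rintro rfl
      exact hBA (SetLike.coe_injective (hBq.trans hAp.symm))
    obtain ⟨U, V, hU, hV, hpU, hqV, hUV⟩ := t2_separation hpq
    refine ⟨vdia (vbox U) ∩ vdia (vbox V),
      (isOpen_vdia (isOpen_vbox hU)).inter (isOpen_vdia (isOpen_vbox hV)), ?_, ?_⟩
    · intro c hc
      constructor
      · exact ⟨A, by rw [hc]; exact hAS,
          by rw [vbox, mem_setOf_eq, hAp]; exact singleton_subset_iff.2 hpU⟩
      · exact ⟨B, by rw [hc]; exact hBS,
          by rw [vbox, mem_setOf_eq, hBq]; exact singleton_subset_iff.2 hqV⟩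
    · rintro d x y hd ⟨⟨a1, ha1D, ha1U⟩, ⟨a2, ha2D, ha2V⟩⟩
      rw [hd] at ha1D ha2D
      exact hUV.le_bot ⟨ha1U (mem_of_kur ha1D), ha2V (mem_of_kur ha2D)⟩

end Aux

theorem kuratowski_pairs_closed {X : Type*} [TopologicalSpace X] [T2Space X] :
    IsClosed {c : {c : Closeds (Closeds X) // (c.1 : Set (Closeds X)).encard ≤ 2} |
      ∃ x y : X, (c.1.1 : Set (Closeds X)) =
        {a : Closeds X | (a : Set X) = {x} ∨ (a : Set X) = ({x, y} : Set X)}} := by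
  rw [← isOpen_compl_iff, isOpen_iff_forall_mem_open]
  rintro c hc
  rw [mem_compl_iff, mem_setOf_eq] at hc
  obtain ⟨N, hNo, hmem, hexcl⟩ := main (X := X) (c.1 : Set (Closeds X)) c.2 hc
  refine ⟨Subtype.val ⁻¹' N, ?_, hNo.preimage continuous_subtype_val, hmem c.1 rfl⟩
  intro d hd
  rw [mem_compl_iff, mem_setOf_eq]
  rintro ⟨x, y, hxy⟩
  exact hexcl d.1 x y hxy hd
end
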